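/- Let f, g, h be entire functions satisfying conditions (F), (G), (H) respectively. Then the composite f∘h∘g satisfies: |(f∘h∘g)(z) - 2| < 1/2 for all z ∈ E_0; |(f∘h∘g)(z) + 14| < 1/2 for all z ∈ G_1 and all z ∈ G_2; |(f∘h∘g)(z) + 10| < 1/2 for all z ∈ G_3; |(f∘h∘g)(z) + 6| < 1/2 for all z ∈ G_k for every k >= 4; and |(f∘h∘g)(z) + (4k+14)| < 1/2 for all z ∈ B_k for every k >= 1. -/

import Mathlib

open Complex Metric

noncomputable section

/-- `Gset k` is the set `G_k` for `k ≥ 1`. -/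
def Gset (k : ℕ) : Set ℂ :=
  {z | Norm.norm (z - (4*(k:ℂ)+2)) ≤ 1} ∪
  {z | z.re = 4*(k:ℝ)+2 ∧ 1 ≤ z.im} ∪
  {z | z.re = 4*(k:ℝ)+2 ∧ z.im ≤ -1}

/-- `Bset k` is the set `B_k` for `k ≥ 1`. -/
def Bset (k : ℕ) : Set ℂ :=
  {z | Norm.norm (z + (4*(k:ℂ)+2)) ≤ 1} ∪
  {z | z.re = -(4*(k:ℝ)+2) ∧ 1 ≤ z.im} ∪
  {z | z.re = -(4*(k:ℝ)+2) ∧ z.im ≤ -1}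

/-- `Lset k` is the vertical line `Re z = 4k`. -/
def Lset (k : ℕ) : Set ℂ := {z | z.re = 4*(k:ℝ)}

/-- `Mset k` is the vertical line `Re z = -4k`. -/
def Mset (k : ℕ) : Set ℂ := {z | z.re = -(4*(k:ℝ))}

/-- `G0` is the closed disk `|z - 2| ≤ 1`. -/
def G0 : Set ℂ := {z | Norm.norm (z - 2) ≤ 1}

/-- `E0 = G_0 ∪ ⋃_{k ≥ 1} (L_k ∪ M_k)`. -/
def E0 : Set ℂ := G0 ∪ ⋃ k ∈ Set.Ici 1, (Lset k ∪ Mset k)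

/-- Condition (F). -/
def CondF (f : ℂ → ℂ) : Prop :=
  (∀ z ∈ E0, Norm.norm (f z - 2) < 1/2) ∧
  (∀ k : ℕ, 1 ≤ k → ∀ z ∈ Gset k, Norm.norm (f z + 6) < 1/2) ∧
  (∀ k : ℕ, 1 ≤ k → ∀ z ∈ Bset k, Norm.norm (f z + (4*(k:ℂ)+6)) < 1/2)

/-- Condition (G). -/
def CondG (g : ℂ → ℂ) : Prop :=
  (∀ z ∈ E0, Norm.norm (g z - 2) < 1/2) ∧
  (∀ z ∈ Gset 1, Norm.norm (g z + 6) < 1/2) ∧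
  (∀ k : ℕ, 2 ≤ k → ∀ z ∈ Gset k, Norm.norm (g z - (4*(k:ℂ)-2)) < 1/2) ∧
  (∀ k : ℕ, 1 ≤ k → ∀ z ∈ Bset k, Norm.norm (g z + (4*(k:ℂ)+6)) < 1/2)

/-- Condition (H). -/
def CondH (h : ℂ → ℂ) : Prop :=
  (∀ z ∈ E0, Norm.norm (h z - 2) < 1/2) ∧
  (∀ z ∈ Gset 1, Norm.norm (h z + 10) < 1/2) ∧
  (∀ z ∈ Gset 2, Norm.norm (h z + 6) < 1/2) ∧
  (∀ k : ℕ, 3 ≤ k → ∀ z ∈ Gset k, Norm.norm (h z - (4*(k:ℂ)-6)) < 1/2) ∧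
  (∀ k : ℕ, 1 ≤ k → ∀ z ∈ Bset k, Norm.norm (h z + (4*(k:ℂ)+6)) < 1/2)

lemma memG {k : ℕ} {w : ℂ} (hw : Norm.norm (w - (4*(k:ℂ)+2)) ≤ 1) : w ∈ Gset k :=
  Set.mem_union_left _ (Set.mem_union_left _ hw)

lemma memB {k : ℕ} {w : ℂ} (hw : Norm.norm (w + (4*(k:ℂ)+2)) ≤ 1) : w ∈ Bset k :=
  Set.mem_union_left _ (Set.mem_union_left _ hw)

theorem comp_fhg (f g h : ℂ → ℂ)
    (hf : Differentiable ℂ f) (hg : Differentiable ℂ g) (hh : Differentiable ℂ h)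
    (hF : CondF f) (hG : CondG g) (hH : CondH h) :
    (∀ z ∈ E0, Norm.norm ((f ∘ h ∘ g) z - 2) < 1/2) ∧
    (∀ z ∈ Gset 1, Norm.norm ((f ∘ h ∘ g) z + 14) < 1/2) ∧
    (∀ z ∈ Gset 2, Norm.norm ((f ∘ h ∘ g) z + 14) < 1/2) ∧
    (∀ z ∈ Gset 3, Norm.norm ((f ∘ h ∘ g) z + 10) < 1/2) ∧
    (∀ k : ℕ, 4 ≤ k → ∀ z ∈ Gset k, Norm.norm ((f ∘ h ∘ g) z + 6) < 1/2) ∧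
    (∀ k : ℕ, 1 ≤ k → ∀ z ∈ Bset k, Norm.norm ((f ∘ h ∘ g) z + (4*(k:ℂ)+14)) < 1/2) := by
  obtain ⟨hF1, hF2, hF3⟩ := hF
  obtain ⟨hG1, hG2, hG3, hG4⟩ := hG
  obtain ⟨hH1, hH2, hH3, hH4, hH5⟩ := hH
  refine ⟨?_, ?_, ?_, ?_, ?_, ?_⟩
  · -- E0
    intro z hz
    have h1 := hG1 z hz
    have m1 : g z ∈ E0 := Set.mem_union_left _ (h1.le.trans (by norm_num))
    have h2 := hH1 _ m1
    have m2 : h (g z) ∈ E0 := Set.mem_union_left _ (h2.le.trans (by norm_num))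
    simpa [Function.comp] using hF1 _ m2
  · -- Gset 1
    intro z hz
    have h1 := hG2 z hz
    have m1 : g z ∈ Bset 1 := memB (by
      have e : (4*((1:ℕ):ℂ)+2) = 6 := by norm_num
      rw [e]; exact h1.le.trans (by norm_num))
    have h2 := hH5 1 le_rfl _ m1
    have m2 : h (g z) ∈ Bset 2 := memB (by
      have e : (4*((2:ℕ):ℂ)+2) = 4*((1:ℕ):ℂ)+6 := by norm_num
      rw [e]; exact h2.le.trans (by norm_num))
    have h3 := hF3 2 (by norm_num) _ m2
    have e : (4*((2:ℕ):ℂ)+6) = 14 := by norm_num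
    rw [e] at h3
    simpa [Function.comp] using h3
  · -- Gset 2
    intro z hz
    have h1 := hG3 2 le_rfl z hz
    have m1 : g z ∈ Gset 1 := memG (by
      have e : (4*((1:ℕ):ℂ)+2) = 4*((2:ℕ):ℂ)-2 := by norm_num
      rw [e]; exact h1.le.trans (by norm_num))
    have h2 := hH2 _ m1
    have m2 : h (g z) ∈ Bset 2 := memB (by
      have e : (4*((2:ℕ):ℂ)+2) = 10 := by norm_num
      rw [e]; exact h2.le.trans (by norm_num))
    have h3 := hF3 2 (by norm_num) _ m2
    have e : (4*((2:ℕ):ℂ)+6) = 14 := by norm_num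
    rw [e] at h3
    simpa [Function.comp] using h3
  · -- Gset 3
    intro z hz
    have h1 := hG3 3 (by norm_num) z hz
    have m1 : g z ∈ Gset 2 := memG (by
      have e : (4*((2:ℕ):ℂ)+2) = 4*((3:ℕ):ℂ)-2 := by norm_num
      rw [e]; exact h1.le.trans (by norm_num))
    have h2 := hH3 _ m1
    have m2 : h (g z) ∈ Bset 1 := memB (by
      have e : (4*((1:ℕ):ℂ)+2) = 6 := by norm_num
      rw [e]; exact h2.le.trans (by norm_num))
    have h3 := hF3 1 le_rfl _ m2
    have e : (4*((1:ℕ):ℂ)+6) = 10 := by norm_num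
    rw [e] at h3
    simpa [Function.comp] using h3
  · -- Gset k, k ≥ 4
    intro k hk z hz
    obtain ⟨m, rfl⟩ : ∃ m, k = m + 4 := ⟨k - 4, by omega⟩
    have h1 := hG3 (m+4) (by omega) z hz
    have m1 : g z ∈ Gset (m+3) := memG (by
      have e : (4*(((m+3:ℕ)):ℂ)+2) = 4*(((m+4:ℕ)):ℂ)-2 := by push_cast; ring
      rw [e]; exact h1.le.trans (by norm_num))
    have h2 := hH4 (m+3) (by omega) _ m1
    have m2 : h (g z) ∈ Gset (m+1) := memG (by
      have e : (4*(((m+1:ℕ)):ℂ)+2) = 4*(((m+3:ℕ)):ℂ)-6 := by push_cast; ring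
      rw [e]; exact h2.le.trans (by norm_num))
    have h3 := hF2 (m+1) (by omega) _ m2
    simpa [Function.comp] using h3
  · -- Bset k, k ≥ 1
    intro k hk z hz
    have h1 := hG4 k hk z hz
    have m1 : g z ∈ Bset (k+1) := memB (by
      have e : (4*(((k+1:ℕ)):ℂ)+2) = 4*((k:ℕ):ℂ)+6 := by push_cast; ring
      rw [e]; exact h1.le.trans (by norm_num))
    have h2 := hH5 (k+1) (by omega) _ m1
    have m2 : h (g z) ∈ Bset (k+2) := memB (by
      have e : (4*(((k+2:ℕ)):ℂ)+2) = 4*(((k+1:ℕ)):ℂ)+6 := by push_cast; ring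
      rw [e]; exact h2.le.trans (by norm_num))
    have h3 := hF3 (k+2) (by omega) _ m2
    have e : (4*(((k+2:ℕ)):ℂ)+6) = 4*((k:ℕ):ℂ)+14 := by push_cast; ring
    rw [e] at h3
    simpa [Function.comp] using h3
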